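/- arXiv:1301.0516 — 4 statements merged into one kernel-verified Lean document; each statement's English description precedes it below -/
import Mathlib

section
/- For n ≥ 2, the set of supports of n-concatenations equals the set of supports of n-op-concatenations; more precisely, for any n-concatenation (p_1, …, p_{n-1}) of relations along a directed path T there exists a unique n-op-concatenation (q^1, …, q^{n-1}) in T with the same support path, and conversely. -/
/-!
Common framework for formalizing "Hochschild cohomology of triangular string
algebras and its ring structure" (Redondo–Román).

* Interval combinatorics model of Bardzell's `n`-concatenations along a directed
  path (a directed path is modelled by the line `ℕ`, a subpath by an interval,
  and a relation by the interval it occupies).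
* A combinatorial model of a bound quiver `(Q, I)` with `I` a monomial ideal
  generated by a reduced set `R` of paths: paths are nonempty composable lists
  of arrows, `AP_n` is the set of supports of `n`-concatenations, `𝒫` is the
  basis of `A = kQ/I` given by the paths not in `I`.
* The Hochschild complex `Hom_{E-E}(kAP_n, A) ≅ k(AP_n ∥ 𝒫)` of a (triangular)
  monomial algebra obtained from Bardzell's minimal resolution, with its
  differentials `F_n` realized as explicit matrices, and the Hochschild
  cohomology `HH^n(A)` defined as the cohomology of this complex (for monomial
  algebras this complex computes Hochschild cohomology, by Bardzell's theorem).
-/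

attribute [local instance] Classical.propDecidable

noncomputable section

namespace Paper

/-! ### Interval model of concatenations along a directed path -/

/-- An interval `(s, t)` on the line `ℕ`: the model of a subpath of a fixed
directed path `T`, going from vertex `s` to vertex `t`. -/
abbrev Iv := ℕ × ℕ

/-- `R` is a reduced set of relations along a directed path: every relation is a
path of length at least two, and no relation divides another one. -/
structure RelSet (R : Set Iv) : Prop where
  len : ∀ r ∈ R, r.1 + 2 ≤ r.2
  nodiv : ∀ r ∈ R, ∀ r' ∈ R, r.1 ≤ r'.1 → r'.2 ≤ r.2 → r = r'

/-- The window from which the `(i+1)`-st relation (0-based index `i ≥ 1`) of a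
concatenation is chosen: `L_1 = {p ∈ R : s(p_1) < s(p) < t(p_1)}` and
`L_{j+1} = {p ∈ R : t(p_{j-1}) ≤ s(p) < t(p_j)}`. -/
def cWindow (R : Set Iv) (p : ℕ → Iv) (i : ℕ) : Set Iv :=
  if i = 1 then {q | q ∈ R ∧ (p 0).1 < q.1 ∧ q.1 < (p 0).2}
  else {q | q ∈ R ∧ (p (i - 2)).2 ≤ q.1 ∧ q.1 < (p (i - 1)).2}

/-- `IsConcat R k p` : the relations `p 0, p 1, …, p (k-1)` form a
`(k+1)`-concatenation `(p_1, …, p_k)` in Bardzell's sense: each `p i` (for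
`1 ≤ i < k`) is a relation of the corresponding window with minimal source. -/
def IsConcat (R : Set Iv) (k : ℕ) (p : ℕ → Iv) : Prop :=
  p 0 ∈ R ∧ ∀ i, 1 ≤ i → i < k →
    (p i ∈ cWindow R p i ∧ ∀ q ∈ cWindow R p i, (p i).1 ≤ q.1)

/-- The dual window: `L_1^{op} = {q ∈ R : s(q_1) < t(q) < t(q_1)}` and
`L_{j+1}^{op} = {q ∈ R : s(q_j) < t(q) ≤ s(q_{j-1})}`. -/
def oWindow (R : Set Iv) (q : ℕ → Iv) (i : ℕ) : Set Iv :=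
  if i = 1 then {r | r ∈ R ∧ (q 0).1 < r.2 ∧ r.2 < (q 0).2}
  else {r | r ∈ R ∧ (q (i - 1)).1 < r.2 ∧ r.2 ≤ (q (i - 2)).1}

/-- `IsOpConcat R k q` : the relations `q 0, …, q (k-1)` form a
`(k+1)`-op-concatenation `(q_{k}, …, q_1)` (so `q 0 = q_k` is built first and
`q^j = q (k - j)` in the paper's upper-index notation): each `q i` (for
`1 ≤ i < k`) is a relation of the corresponding dual window with maximal
target. -/
def IsOpConcat (R : Set Iv) (k : ℕ) (q : ℕ → Iv) : Prop :=
  q 0 ∈ R ∧ ∀ i, 1 ≤ i → i < k →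
    (q i ∈ oWindow R q i ∧ ∀ r ∈ oWindow R q i, r.2 ≤ (q i).2)

/-- `IsSupport R n w` : the interval `w` is the support of an
`n`-concatenation (for `n = 0` a vertex, for `n = 1` an arrow). -/
def IsSupport (R : Set Iv) : ℕ → Iv → Prop
  | 0, w => w.2 = w.1
  | 1, w => w.2 = w.1 + 1
  | (n + 2), w => ∃ p : ℕ → Iv, IsConcat R (n + 1) p ∧ (p 0).1 = w.1 ∧ (p n).2 = w.2

/-- `IsOpSupport R n w` : the interval `w` is the support of an
`n`-op-concatenation. -/
def IsOpSupport (R : Set Iv) : ℕ → Iv → Prop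
  | 0, w => w.2 = w.1
  | 1, w => w.2 = w.1 + 1
  | (n + 2), w => ∃ q : ℕ → Iv, IsOpConcat R (n + 1) q ∧ (q n).1 = w.1 ∧ (q 0).2 = w.2

/-! ### The combinatorial model of a monomial (string) bound quiver -/

/-- A finite quiver, given by raw data. -/
structure QuivData where
  V : Type
  E : Type
  src : E → V
  tgt : E → V

variable (Q : QuivData)

/-- A (nontrivial) path in `Q`: a nonempty composable list of arrows. -/
def IsPathL (l : List Q.E) : Prop :=
  l ≠ [] ∧ l.Chain' fun a b => Q.tgt a = Q.src b

/-- The source vertex of a nonempty list of arrows (as an `Option`). -/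
def psrc (l : List Q.E) : Option Q.V := l.head?.map Q.src

/-- The target vertex of a nonempty list of arrows (as an `Option`). -/
def ptgt (l : List Q.E) : Option Q.V := l.getLast?.map Q.tgt

/-- `l` lies in the (monomial) ideal `I = ⟨R⟩`: some relation divides `l`. -/
def inI (R : Set (List Q.E)) (l : List Q.E) : Prop := ∃ r ∈ R, r <:+: l

/-- `l` belongs to the canonical basis `𝒫` of `A = kQ/I`: a nontrivial path
not in `I`.  (Trivial paths `e_x` are treated separately.) -/
def isP (R : Set (List Q.E)) (l : List Q.E) : Prop := IsPathL Q l ∧ ¬ inI Q R l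

/-- `(Q, R)` presents a **triangular string algebra**: relations are paths of
length `≥ 2`, form a reduced (minimal) generating set, the string conditions
S1), S2) hold, and `Q` has no oriented cycles. -/
structure StringData (R : Set (List Q.E)) : Prop where
  relPath : ∀ r ∈ R, IsPathL Q r ∧ 2 ≤ r.length
  relMin : ∀ r ∈ R, ∀ r' ∈ R, r' <:+: r → r' = r
  srcTwo : ∀ v : Q.V, ∀ a b c : Q.E, Q.src a = v → Q.src b = v → Q.src c = v →
    a = b ∨ a = c ∨ b = c
  tgtTwo : ∀ v : Q.V, ∀ a b c : Q.E, Q.tgt a = v → Q.tgt b = v → Q.tgt c = v →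
    a = b ∨ a = c ∨ b = c
  uniqRight : ∀ a b c : Q.E, Q.tgt a = Q.src b → Q.tgt a = Q.src c →
    [a, b] ∉ R → [a, c] ∉ R → b = c
  uniqLeft : ∀ a b c : Q.E, Q.tgt b = Q.src a → Q.tgt c = Q.src a →
    [b, a] ∉ R → [c, a] ∉ R → b = c
  triangular : ∀ l : List Q.E, IsPathL Q l → psrc Q l ≠ ptgt Q l

/-- The subpath of `l` occupying the positions `[c.1, c.2)`. -/
def slice (l : List Q.E) (c : Iv) : List Q.E := (l.drop c.1).take (c.2 - c.1)

/-- The intervals of positions of `w` occupied by relations of `R`. -/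
def relIvs (R : Set (List Q.E)) (w : List Q.E) : Set Iv :=
  {c | c.1 < c.2 ∧ c.2 ≤ w.length ∧ slice Q w c ∈ R}

/-- `w ∈ AP_n` : `w` is the support of an `n`-concatenation of relations of
`R` (for `n = 1`, an arrow; the vertices `AP_0` are treated separately). -/
def IsAP (R : Set (List Q.E)) : ℕ → List Q.E → Prop
  | 0, _ => False
  | 1, w => IsPathL Q w ∧ w.length = 1
  | (n + 2), w => IsPathL Q w ∧ IsSupport (relIvs Q R w) (n + 2) (0, w.length)

/-- `w ∈ AP_n^{op}` : `w` is the support of an `n`-op-concatenation. -/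
def IsAPop (R : Set (List Q.E)) : ℕ → List Q.E → Prop
  | 0, _ => False
  | 1, w => IsPathL Q w ∧ w.length = 1
  | (n + 2), w => IsPathL Q w ∧ IsOpSupport (relIvs Q R w) (n + 2) (0, w.length)

/-- A pair of parallel paths. -/
abbrev Pr := List Q.E × List Q.E

/-- The set `(AP_n ∥ 𝒫)` of pairs `(ρ, γ)` with `ρ ∈ AP_n`, `γ ∈ 𝒫` and
`ρ, γ` parallel; it indexes a basis of `Hom_{E-E}(kAP_n, A)`. -/
def PairSet (R : Set (List Q.E)) (n : ℕ) : Set (Pr Q) :=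
  {x | IsAP Q R n x.1 ∧ isP Q R x.2 ∧ psrc Q x.1 = psrc Q x.2 ∧ ptgt Q x.1 = ptgt Q x.2}

/-- `ρ` and `γ` have the same first arrow. -/
def sharesFirst (x : Pr Q) : Prop := x.1.head? = x.2.head?

/-- `ρ` and `γ` have the same last arrow. -/
def sharesLast (x : Pr Q) : Prop := x.1.getLast? = x.2.getLast?

/-- The class `(0,0)_n`. -/
def cls00 (R : Set (List Q.E)) (n : ℕ) : Set (Pr Q) :=
  {x ∈ PairSet Q R n | ¬ sharesFirst Q x ∧ ¬ sharesLast Q x}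

/-- The class `(1,0)_n`. -/
def cls10 (R : Set (List Q.E)) (n : ℕ) : Set (Pr Q) :=
  {x ∈ PairSet Q R n | sharesFirst Q x ∧ ¬ sharesLast Q x}

/-- The class `(0,1)_n`. -/
def cls01 (R : Set (List Q.E)) (n : ℕ) : Set (Pr Q) :=
  {x ∈ PairSet Q R n | ¬ sharesFirst Q x ∧ sharesLast Q x}

/-- The class `(1,1)_n`. -/
def cls11 (R : Set (List Q.E)) (n : ℕ) : Set (Pr Q) :=
  {x ∈ PairSet Q R n | sharesFirst Q x ∧ sharesLast Q x}

/-- `Q_1 · γ ⊆ I` (left decoration `⁻`). -/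
def leftI (R : Set (List Q.E)) (γ : List Q.E) : Prop :=
  ∀ b : Q.E, some (Q.tgt b) = psrc Q γ → inI Q R (b :: γ)

/-- `γ · Q_1 ⊆ I` (right decoration `⁻`). -/
def rightI (R : Set (List Q.E)) (γ : List Q.E) : Prop :=
  ∀ b : Q.E, some (Q.src b) = ptgt Q γ → inI Q R (γ ++ [b])

/-- `Q_1 · γ̂ ⊆ I` where `γ = γ̂ α₂`, i.e. `γ̂ = γ.dropLast`. -/
def leftIHat (R : Set (List Q.E)) (γ : List Q.E) : Prop :=
  ∀ b : Q.E, some (Q.tgt b) = psrc Q γ → inI Q R (b :: γ.dropLast)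

/-- `γ̂ · Q_1 ⊆ I` where `γ = α₁ γ̂`, i.e. `γ̂ = γ.tail`. -/
def rightIHat (R : Set (List Q.E)) (γ : List Q.E) : Prop :=
  ∀ b : Q.E, some (Q.src b) = ptgt Q γ → inI Q R (γ.tail ++ [b])

/-- `⁻(0,0)⁻_n`. -/
def mm00 (R : Set (List Q.E)) (n : ℕ) : Set (Pr Q) :=
  {x ∈ cls00 Q R n | leftI Q R x.2 ∧ rightI Q R x.2}

/-- `⁻(0,1)_n`. -/
def m01 (R : Set (List Q.E)) (n : ℕ) : Set (Pr Q) :=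
  {x ∈ cls01 Q R n | leftI Q R x.2}

/-- `⁺⁻(0,1)_n`. -/
def pm01 (R : Set (List Q.E)) (n : ℕ) : Set (Pr Q) :=
  {x ∈ cls01 Q R n | leftI Q R x.2 ∧ ¬ leftIHat Q R x.2}

/-- `⁻⁻(0,1)_n`. -/
def mm01 (R : Set (List Q.E)) (n : ℕ) : Set (Pr Q) :=
  {x ∈ cls01 Q R n | leftI Q R x.2 ∧ leftIHat Q R x.2}

/-- `(1,0)_n⁻`. -/
def m10 (R : Set (List Q.E)) (n : ℕ) : Set (Pr Q) :=
  {x ∈ cls10 Q R n | rightI Q R x.2}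

/-! ### The Hochschild complex obtained from Bardzell's resolution -/

variable (k : Type) [Field k]

/-- The `(y, x)` matrix entry of the differential `F_n` of the Hochschild
complex: for `x = (w, γ) ∈ (AP_n ∥ 𝒫)` and `y = (ψ, γ') ∈ (AP_{n-1} ∥ 𝒫)`, the
signed number of ways of dividing `w = L(ψ) ψ R(ψ)` (with `L, R` not both
trivial) so that `γ = L(ψ) γ' R(ψ)`; the sign is `(-1)^n` for the division
with trivial `L(ψ)` (this reproduces `F_{2m}` and `F_{2m+1}` of the paper). -/
def coeffF (R : Set (List Q.E)) (n : ℕ) (y x : Pr Q) : k :=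
  ∑ᶠ c : Iv,
    if c.1 < c.2 ∧ c.2 ≤ x.1.length ∧ ¬(c.1 = 0 ∧ c.2 = x.1.length) ∧
        y.1 = slice Q x.1 c ∧ x.2 = x.1.take c.1 ++ y.2 ++ x.1.drop c.2 then
      (if c.1 = 0 then (-1 : k) ^ n else 1)
    else 0

/-- The differential `F_n : Hom_{E-E}(kAP_{n-1}, A) → Hom_{E-E}(kAP_n, A)`
(`n ≥ 2`), in the bases `(AP_{n-1} ∥ 𝒫)`, `(AP_n ∥ 𝒫)`. -/
def F (R : Set (List Q.E)) (n : ℕ) [Fintype ↥(PairSet Q R (n - 1))] :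
    (↥(PairSet Q R (n - 1)) → k) →ₗ[k] (↥(PairSet Q R n) → k) :=
  Matrix.mulVecLin (Matrix.of fun x y => coeffF Q k R n y.val x.val)

/-- The differential `F_1 : Hom_{E-E}(kAP_0, A) → Hom_{E-E}(kAP_1, A)`; for a
triangular algebra `Hom_{E-E}(kAP_0, A) ≅ kQ_0`. -/
def F1 (R : Set (List Q.E)) [Fintype Q.V] [Fintype ↥(PairSet Q R 1)] :
    (Q.V → k) →ₗ[k] (↥(PairSet Q R 1) → k) :=
  Matrix.mulVecLin (Matrix.of fun x v =>
    if x.val.2 = x.val.1 then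
      (if ptgt Q x.val.1 = some v then (1 : k) else 0) -
        (if psrc Q x.val.1 = some v then (1 : k) else 0)
    else 0)

/-- `HH^0(A) = Ker F_1`. -/
abbrev HH0 (R : Set (List Q.E)) [Fintype Q.V] [Fintype ↥(PairSet Q R 1)] :=
  ↥(LinearMap.ker (F1 Q k R))

/-- `HH^1(A) = Ker F_2 / Im F_1`. -/
abbrev HH1 (R : Set (List Q.E)) [Fintype Q.V] [∀ j, Fintype ↥(PairSet Q R j)] :=
  ↥(LinearMap.ker (F Q k R 2)) ⧸
    Submodule.comap (LinearMap.ker (F Q k R 2)).subtype (LinearMap.range (F1 Q k R))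

/-- `HH^n(A) = Ker F_{n+1} / Im F_n` for `n ≥ 2`. -/
abbrev HHn (R : Set (List Q.E)) (n : ℕ) [∀ j, Fintype ↥(PairSet Q R j)] :=
  ↥(LinearMap.ker (F Q k R (n + 1))) ⧸
    Submodule.comap (LinearMap.ker (F Q k R (n + 1))).subtype (LinearMap.range (F Q k R n))

/-- The underlying graph of `Q` is connected. -/
def connectedQ : Prop :=
  (SimpleGraph.fromRel fun u v => ∃ a : Q.E, Q.src a = u ∧ Q.tgt a = v).Connected

/-- The underlying graph of the finite quiver `Q` is a tree (connected with
`|Q_1| = |Q_0| - 1`). -/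
def IsTreeQuiv [Fintype Q.V] [Fintype Q.E] : Prop :=
  connectedQ Q ∧ Fintype.card Q.E + 1 = Fintype.card Q.V

/-- A monomial algebra is simply connected iff its quiver is a tree; we use
this characterization as the definition of simple connectedness. -/
def SimplyConnected [Fintype Q.V] [Fintype Q.E] : Prop := IsTreeQuiv Q

/-!
Reversing the line, `r ↦ (toDual r.2, toDual r.1)`, exchanges concatenations and
op-concatenations, so it suffices to turn a concatenation `p 0, …, p m` into an
op-concatenation with the same support. Choose `q` greedily from `q 0 = p m` and show by
induction that each `q l` is squeezed against `p (m - l)`; this keeps `p (m - l - 1)` in the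
window of `q (l + 1)`, so the greedy choice exists, and for `l = m` it forces `q m` to start
where `p 0` does. Uniqueness: in a nest-free set a relation is determined by its source, and
also by its target, and each later term of an (op-)concatenation is determined by the earlier
ones.
-/

open OrderDual

section Reversal

variable {α : Type*}

def revDual (r : α × α) : αᵒᵈ × αᵒᵈ := (toDual r.2, toDual r.1)

def dualSet (R : Set (α × α)) : Set (αᵒᵈ × αᵒᵈ) := {r | (ofDual r.2, ofDual r.1) ∈ R}

theorem revDual_injective : Function.Injective (revDual : α × α → αᵒᵈ × αᵒᵈ) :=
  fun _ _ h => Prod.ext (congrArg (ofDual ∘ Prod.snd) h) (congrArg (ofDual ∘ Prod.fst) h)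

theorem revDual_surjective : Function.Surjective (revDual : α × α → αᵒᵈ × αᵒᵈ) :=
  fun r => ⟨(ofDual r.2, ofDual r.1), rfl⟩

end Reversal

section GreedyConcat

variable {α : Type*} [LinearOrder α]

def NestFree (R : Set (α × α)) : Prop :=
  ∀ r ∈ R, ∀ r' ∈ R, r.1 ≤ r'.1 → r'.2 ≤ r.2 → r = r'

/- `IsConcat` and `IsOpConcat` on an arbitrary linear order instead of `ℕ`: this lets
`OrderDual` exchange the two notions. -/

def concatWindow (R : Set (α × α)) (p : ℕ → α × α) (i : ℕ) : Set (α × α) :=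
  if i = 1 then {q | q ∈ R ∧ (p 0).1 < q.1 ∧ q.1 < (p 0).2}
  else {q | q ∈ R ∧ (p (i - 2)).2 ≤ q.1 ∧ q.1 < (p (i - 1)).2}

def IsGreedyConcat (R : Set (α × α)) (n : ℕ) (p : ℕ → α × α) : Prop :=
  p 0 ∈ R ∧ ∀ i, 1 ≤ i → i < n →
    (p i ∈ concatWindow R p i ∧ ∀ q ∈ concatWindow R p i, (p i).1 ≤ q.1)

def opWindow (R : Set (α × α)) (q : ℕ → α × α) (i : ℕ) : Set (α × α) :=
  if i = 1 then {r | r ∈ R ∧ (q 0).1 < r.2 ∧ r.2 < (q 0).2}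
  else {r | r ∈ R ∧ (q (i - 1)).1 < r.2 ∧ r.2 ≤ (q (i - 2)).1}

def IsGreedyOpConcat (R : Set (α × α)) (n : ℕ) (q : ℕ → α × α) : Prop :=
  q 0 ∈ R ∧ ∀ i, 1 ≤ i → i < n →
    (q i ∈ opWindow R q i ∧ ∀ r ∈ opWindow R q i, r.2 ≤ (q i).2)

variable {R : Set (α × α)} {r r' : α × α}

namespace NestFree

theorem snd_le_snd (hR : NestFree R) (hr : r ∈ R) (hr' : r' ∈ R) (h : r.1 ≤ r'.1) :
    r.2 ≤ r'.2 := by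
  by_contra! h'
  rw [hR r hr r' hr' h h'.le] at h'
  exact lt_irrefl _ h'

theorem fst_le_fst_iff (hR : NestFree R) (hr : r ∈ R) (hr' : r' ∈ R) :
    r.1 ≤ r'.1 ↔ r.2 ≤ r'.2 := by
  refine ⟨hR.snd_le_snd hr hr', fun h => ?_⟩
  by_contra! h'
  rw [hR r' hr' r hr h'.le h] at h'
  exact lt_irrefl _ h'

theorem fst_lt_fst_iff (hR : NestFree R) (hr : r ∈ R) (hr' : r' ∈ R) :
    r.1 < r'.1 ↔ r.2 < r'.2 := by
  simpa only [not_le] using (hR.fst_le_fst_iff hr' hr).not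

theorem eq_of_fst_eq (hR : NestFree R) (hr : r ∈ R) (hr' : r' ∈ R) (h : r.1 = r'.1) :
    r = r' :=
  hR r hr r' hr' h.le ((hR.fst_le_fst_iff hr' hr).1 h.ge)

theorem injOn_snd (hR : NestFree R) : Set.InjOn Prod.snd R := fun r hr r' hr' h =>
  hR r hr r' hr' ((hR.fst_le_fst_iff hr hr').2 h.le) h.ge

theorem exists_max_snd [LocallyFiniteOrder α] (hR : NestFree R) {W : Set (α × α)}
    (hWR : W ⊆ R) (hW : W.Nonempty) {a b : α} (hab : ∀ r ∈ W, r.2 ∈ Set.Icc a b) :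
    ∃ r ∈ W, ∀ r' ∈ W, r'.2 ≤ r.2 := by
  have hfin : (Prod.snd '' W).Finite :=
    (Set.finite_Icc a b).subset (Set.image_subset_iff.2 hab)
  exact Set.exists_max_image W Prod.snd (hfin.of_finite_image (hR.injOn_snd.mono hWR)) hW

end NestFree

variable {p p' q q' : ℕ → α × α} {n m i j : ℕ} {x : α}

def concatFloor (p : ℕ → α × α) (i : ℕ) (x : α) : Prop :=
  if i = 1 then (p 0).1 < x else (p (i - 2)).2 ≤ x

theorem concatFloor_one : concatFloor p 1 x ↔ (p 0).1 < x := Iff.of_eq (if_pos rfl)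

theorem concatFloor_add_two : concatFloor p (i + 2) x ↔ (p i).2 ≤ x :=
  Iff.of_eq (if_neg (by omega))

theorem mem_concatWindow_succ :
    r ∈ concatWindow R p (i + 1) ↔ r ∈ R ∧ concatFloor p (i + 1) r.1 ∧ r.1 < (p i).2 := by
  unfold concatWindow concatFloor
  split_ifs with hi
  · obtain rfl : i = 0 := by omega
    rfl
  · rfl

theorem concatWindow_congr (h : ∀ l ≤ i, p l = p' l) :
    concatWindow R p (i + 1) = concatWindow R p' (i + 1) := by
  unfold concatWindow
  rw [h 0 (by omega), h (i + 1 - 1) (by omega), h (i + 1 - 2) (by omega)]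

theorem opWindow_one : opWindow R q 1 = {r | r ∈ R ∧ (q 0).1 < r.2 ∧ r.2 < (q 0).2} :=
  if_pos rfl

theorem opWindow_add_two :
    opWindow R q (i + 2) = {r | r ∈ R ∧ (q (i + 1)).1 < r.2 ∧ r.2 ≤ (q i).1} :=
  if_neg (by omega)

theorem opWindow_subset : opWindow R q i ⊆ R := by
  unfold opWindow
  split_ifs <;> exact fun r hr => hr.1

theorem fst_lt_snd_of_mem_opWindow (hr : r ∈ opWindow R q (i + 1)) : (q i).1 < r.2 := by
  rcases i with _ | i
  · exact hr.2.1
  · rw [opWindow_add_two] at hr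
    exact hr.2.1

theorem opWindow_congr (h : ∀ l ≤ i, q l = q' l) :
    opWindow R q (i + 1) = opWindow R q' (i + 1) := by
  unfold opWindow
  rw [h 0 (by omega), h (i + 1 - 1) (by omega), h (i + 1 - 2) (by omega)]

namespace IsGreedyConcat

theorem mem (hp : IsGreedyConcat R n p) (hj : j < n) : p j ∈ R := by
  rcases j with _ | j
  · exact hp.1
  · exact (mem_concatWindow_succ.1 (hp.2 _ (by omega) hj).1).1

theorem concatFloor_fst_succ (hp : IsGreedyConcat R n p) (hj : j + 1 < n) :
    concatFloor p (j + 1) (p (j + 1)).1 :=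
  (mem_concatWindow_succ.1 (hp.2 _ (by omega) hj).1).2.1

theorem fst_succ_lt_snd (hp : IsGreedyConcat R n p) (hj : j + 1 < n) :
    (p (j + 1)).1 < (p j).2 :=
  (mem_concatWindow_succ.1 (hp.2 _ (by omega) hj).1).2.2

theorem fst_lt_fst_succ (hp : IsGreedyConcat R n p) (hj : j + 1 < n) :
    (p j).1 < (p (j + 1)).1 := by
  have hfl := hp.concatFloor_fst_succ hj
  rcases j with _ | j
  · exact concatFloor_one.1 hfl
  · exact (hp.fst_succ_lt_snd (by omega)).trans_le (concatFloor_add_two.1 hfl)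

theorem not_concatFloor_succ_fst (hp : IsGreedyConcat R n p) (hj : j < n) :
    ¬ concatFloor p (j + 1) (p j).1 := by
  rcases j with _ | j
  · exact fun h => lt_irrefl _ (concatFloor_one.1 h)
  · exact fun h => (concatFloor_add_two.1 h).not_gt (hp.fst_succ_lt_snd hj)

theorem fst_succ_le_of_concatFloor (hp : IsGreedyConcat R n p) (hj : j + 1 < n)
    (hr : r ∈ R) (hfl : concatFloor p (j + 1) r.1) : (p (j + 1)).1 ≤ r.1 := by
  rcases lt_or_ge r.1 (p j).2 with h | h
  · exact (hp.2 _ (by omega) hj).2 r (mem_concatWindow_succ.2 ⟨hr, hfl, h⟩)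
  · exact (hp.fst_succ_lt_snd hj).le.trans h

theorem eq_of_fst_eq (hR : NestFree R) (hp : IsGreedyConcat R n p)
    (hp' : IsGreedyConcat R n p') (h : (p 0).1 = (p' 0).1) : ∀ i < n, p i = p' i := by
  intro i
  induction i using Nat.strong_induction_on with
  | _ i ih =>
    intro hi
    rcases i with _ | i
    · exact hR.eq_of_fst_eq hp.1 hp'.1 h
    · have hW : concatWindow R p (i + 1) = concatWindow R p' (i + 1) :=
        concatWindow_congr fun l hl => ih l (by omega) (by omega)
      obtain ⟨hmem, hmin⟩ := hp.2 _ (by omega) hi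
      obtain ⟨hmem', hmin'⟩ := hp'.2 _ (by omega) hi
      rw [hW] at hmem hmin
      exact hR.eq_of_fst_eq (hp.mem hi) (hp'.mem hi) ((hmin _ hmem').antisymm (hmin' _ hmem))

end IsGreedyConcat

theorem IsGreedyOpConcat.snoc (hq : IsGreedyOpConcat R (i + 1) q)
    (hr : r ∈ opWindow R q (i + 1)) (hmax : ∀ r' ∈ opWindow R q (i + 1), r'.2 ≤ r.2) :
    IsGreedyOpConcat R (i + 2) (Function.update q (i + 1) r) := by
  have hagree : ∀ l ≤ i, Function.update q (i + 1) r l = q l :=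
    fun l hl => Function.update_of_ne (by omega) _ _
  refine ⟨by rw [hagree 0 (by omega)]; exact hq.1, fun l hl1 hl2 => ?_⟩
  obtain ⟨l, rfl⟩ : ∃ l', l = l' + 1 := ⟨l - 1, by omega⟩
  rw [opWindow_congr fun l' hl' => hagree l' (by omega)]
  rcases (show l < i ∨ l = i by omega) with hl | rfl
  · rw [hagree _ (by omega)]
    exact hq.2 _ hl1 (by omega)
  · rw [Function.update_self]
    exact ⟨hr, hmax⟩

/-- `q l` is squeezed against `p j`, `l + j = m`: it starts no earlier than `p j`, but before
the window from which `p (j + 1)` is chosen begins. -/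
def Interlaced (p q : ℕ → α × α) (m i : ℕ) : Prop :=
  ∀ l j, l ≤ i → l + j = m → (p j).1 ≤ (q l).1 ∧ ¬ concatFloor p (j + 1) (q l).1

theorem Interlaced.mem_opWindow (hint : Interlaced p q m i) (hR : NestFree R)
    (hp : IsGreedyConcat R (m + 1) p) (hq0 : q 0 = p m) (hij : i + j + 1 = m) :
    p j ∈ opWindow R q (i + 1) := by
  rcases i with _ | i
  · obtain rfl : m = j + 1 := by omega
    rw [opWindow_one, hq0]
    exact ⟨hp.mem (by omega), hp.fst_succ_lt_snd (by omega),
      (hR.fst_lt_fst_iff (hp.mem (by omega)) (hp.mem (by omega))).1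
        (hp.fst_lt_fst_succ (by omega))⟩
  · rw [opWindow_add_two]
    have hcur := (hint (i + 1) (j + 1) le_rfl (by omega)).2
    have hprev := (hint i (j + 2) (by omega) (by omega)).1
    exact ⟨hp.mem (by omega), not_le.1 (hcur ∘ concatFloor_add_two.2),
      (concatFloor_add_two.1 (hp.concatFloor_fst_succ (j := j + 1) (by omega))).trans hprev⟩

theorem Interlaced.snd_lt_of_mem_opWindow (hint : Interlaced p q m i) (hq0 : q 0 = p m)
    (hij : i + j + 1 = m) (hr : r ∈ opWindow R q (i + 1)) : r.2 < (p (j + 1)).2 := by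
  rcases i with _ | i
  · obtain rfl : m = j + 1 := by omega
    rw [← hq0]
    exact hr.2.2
  · rw [opWindow_add_two] at hr
    have hprev := (hint i (j + 2) (by omega) (by omega)).2
    exact hr.2.2.trans_lt (not_le.1 (hprev ∘ concatFloor_add_two.2))

theorem Interlaced.update (hint : Interlaced p q m i) (hR : NestFree R)
    (hp : IsGreedyConcat R (m + 1) p) (hq0 : q 0 = p m) (hij : i + j + 1 = m)
    (hr : r ∈ opWindow R q (i + 1)) (hmax : ∀ r' ∈ opWindow R q (i + 1), r'.2 ≤ r.2) :
    Interlaced p (Function.update q (i + 1) r) m (i + 1) := by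
  intro l j' hl hlj
  rcases (show l ≤ i ∨ l = i + 1 by omega) with hl | rfl
  · rw [Function.update_of_ne (by omega)]
    exact hint l j' hl hlj
  obtain rfl : j' = j := by omega
  have hrR := opWindow_subset hr
  rw [Function.update_self]
  refine ⟨(hR.fst_le_fst_iff (hp.mem (by omega)) hrR).2
    (hmax _ (hint.mem_opWindow hR hp hq0 hij)), fun hfl => ?_⟩
  have hle := hp.fst_succ_le_of_concatFloor (by omega) hrR hfl
  exact ((hR.fst_le_fst_iff (hp.mem (by omega)) hrR).1 hle).not_gt
    (hint.snd_lt_of_mem_opWindow hq0 hij hr)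

theorem IsGreedyConcat.exists_interlaced [LocallyFiniteOrder α] (hR : NestFree R)
    (hp : IsGreedyConcat R (m + 1) p) :
    ∀ i ≤ m, ∃ q, IsGreedyOpConcat R (i + 1) q ∧ q 0 = p m ∧ Interlaced p q m i := by
  intro i
  induction i with
  | zero =>
    intro _
    refine ⟨fun _ => p m, ⟨hp.mem (by omega), fun i h1 h2 => by omega⟩, rfl, ?_⟩
    intro l j hl hlj
    obtain ⟨rfl, rfl⟩ : l = 0 ∧ j = m := by omega
    exact ⟨le_rfl, hp.not_concatFloor_succ_fst (by omega)⟩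
  | succ i ih =>
    intro hi
    obtain ⟨q, hq, hq0, hint⟩ := ih (by omega)
    obtain ⟨j, hij⟩ : ∃ j, i + j + 1 = m := ⟨m - i - 1, by omega⟩
    obtain ⟨r, hr, hmax⟩ := hR.exists_max_snd opWindow_subset
      ⟨_, hint.mem_opWindow hR hp hq0 hij⟩ (a := (q i).1) (b := (p (j + 1)).2)
      fun r hr => ⟨(fst_lt_snd_of_mem_opWindow hr).le,
        (hint.snd_lt_of_mem_opWindow hq0 hij hr).le⟩
    refine ⟨_, hq.snoc hr hmax, ?_, hint.update hR hp hq0 hij hr hmax⟩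
    rw [Function.update_of_ne (by omega)]
    exact hq0

theorem IsGreedyConcat.exists_isGreedyOpConcat [LocallyFiniteOrder α] (hR : NestFree R)
    (hp : IsGreedyConcat R n p) :
    ∃ q, IsGreedyOpConcat R n q ∧ (q (n - 1)).1 = (p 0).1 ∧ (q 0).2 = (p (n - 1)).2 := by
  rcases n with _ | m
  · exact ⟨p, ⟨hp.1, fun i _ hi => absurd hi (Nat.not_lt_zero i)⟩, rfl, rfl⟩
  · obtain ⟨q, hq, hq0, hint⟩ := hp.exists_interlaced hR m le_rfl
    obtain ⟨hle, hnot⟩ := hint m 0 le_rfl (by omega)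
    exact ⟨q, hq, (not_lt.1 (hnot ∘ concatFloor_one.2)).antisymm hle, by rw [hq0]; rfl⟩

theorem NestFree.dualSet (hR : NestFree R) : NestFree (dualSet R) := fun _ hr _ hr' h1 h2 =>
  congrArg revDual (hR _ hr _ hr' h2 h1)

theorem revDual_mem_opWindow_dualSet :
    revDual r ∈ opWindow (dualSet R) (revDual ∘ p) i ↔ r ∈ concatWindow R p i := by
  unfold opWindow concatWindow
  split_ifs <;> exact and_congr_right fun _ => and_comm

theorem revDual_mem_concatWindow_dualSet :
    revDual r ∈ concatWindow (dualSet R) (revDual ∘ q) i ↔ r ∈ opWindow R q i := by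
  unfold opWindow concatWindow
  split_ifs <;> exact and_congr_right fun _ => and_comm

theorem isGreedyOpConcat_dualSet_iff :
    IsGreedyOpConcat (dualSet R) n (revDual ∘ p) ↔ IsGreedyConcat R n p :=
  and_congr Iff.rfl <| forall₃_congr fun _ _ _ => and_congr revDual_mem_opWindow_dualSet <|
    revDual_surjective.forall.trans <| forall_congr' fun _ =>
      imp_congr_left revDual_mem_opWindow_dualSet

theorem isGreedyConcat_dualSet_iff :
    IsGreedyConcat (dualSet R) n (revDual ∘ q) ↔ IsGreedyOpConcat R n q :=
  and_congr Iff.rfl <| forall₃_congr fun _ _ _ => and_congr revDual_mem_concatWindow_dualSet <|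
    revDual_surjective.forall.trans <| forall_congr' fun _ =>
      imp_congr_left revDual_mem_concatWindow_dualSet

namespace IsGreedyOpConcat

theorem exists_isGreedyConcat [LocallyFiniteOrder α] (hR : NestFree R)
    (hq : IsGreedyOpConcat R n q) :
    ∃ p, IsGreedyConcat R n p ∧ (p 0).1 = (q (n - 1)).1 ∧ (p (n - 1)).2 = (q 0).2 := by
  obtain ⟨p, hp, hstart, hend⟩ :=
    (isGreedyConcat_dualSet_iff.2 hq).exists_isGreedyOpConcat hR.dualSet
  exact ⟨fun i => (ofDual (p i).2, ofDual (p i).1), isGreedyOpConcat_dualSet_iff.1 hp,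
    congrArg ofDual hend, congrArg ofDual hstart⟩

theorem eq_of_snd_eq (hR : NestFree R) (hq : IsGreedyOpConcat R n q)
    (hq' : IsGreedyOpConcat R n q') (h : (q 0).2 = (q' 0).2) : ∀ i < n, q i = q' i :=
  fun i hi => revDual_injective <| IsGreedyConcat.eq_of_fst_eq hR.dualSet
    (isGreedyConcat_dualSet_iff.2 hq) (isGreedyConcat_dualSet_iff.2 hq') (congrArg toDual h) i hi

end IsGreedyOpConcat

end GreedyConcat

theorem statement0_general (R : Set Iv) (hR : RelSet R) (n : ℕ) :
    (∀ p : ℕ → Iv, IsConcat R (n - 1) p →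
      ∃ q : ℕ → Iv,
        (IsOpConcat R (n - 1) q ∧ (q (n - 2)).1 = (p 0).1 ∧ (q 0).2 = (p (n - 2)).2) ∧
        ∀ q' : ℕ → Iv, IsOpConcat R (n - 1) q' → (q' (n - 2)).1 = (p 0).1 →
          (q' 0).2 = (p (n - 2)).2 → ∀ i < n - 1, q' i = q i) ∧
    (∀ q : ℕ → Iv, IsOpConcat R (n - 1) q →
      ∃ p : ℕ → Iv,
        (IsConcat R (n - 1) p ∧ (p 0).1 = (q (n - 2)).1 ∧ (p (n - 2)).2 = (q 0).2) ∧
        ∀ p' : ℕ → Iv, IsConcat R (n - 1) p' → (p' 0).1 = (q (n - 2)).1 →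
          (p' (n - 2)).2 = (q 0).2 → ∀ i < n - 1, p' i = p i) := by
  have hR : NestFree R := hR.nodiv
  rw [show n - 2 = n - 1 - 1 by omega]
  refine ⟨fun p hp => ?_, fun q hq => ?_⟩
  · obtain ⟨q, hq, hstart, hend⟩ := IsGreedyConcat.exists_isGreedyOpConcat hR hp
    exact ⟨q, ⟨hq, hstart, hend⟩, fun q' hq' _ hend' =>
      IsGreedyOpConcat.eq_of_snd_eq hR hq' hq (hend'.trans hend.symm)⟩
  · obtain ⟨p, hp, hstart, hend⟩ := IsGreedyOpConcat.exists_isGreedyConcat hR hq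
    exact ⟨p, ⟨hp, hstart, hend⟩, fun p' hp' hstart' _ =>
      IsGreedyConcat.eq_of_fst_eq hR hp' hp (hstart'.trans hstart.symm)⟩

/-- **Lemma 3.1 (Bardzell) / Statement 0.** For `n ≥ 2`, `AP_n = AP_n^{op}`:
for any `n`-concatenation `(p_1, …, p_{n-1})` of relations along a directed
path there exists a unique `n`-op-concatenation `(q^1, …, q^{n-1})` with the
same support path, and conversely.  (Recall `q^j = q (n - 1 - j)` in our
0-based indexing, so the op-support runs from `(q (n-2)).1` to `(q 0).2`.) -/
theorem statement0 (R : Set Iv) (hR : RelSet R) (n : ℕ) (hn : 2 ≤ n) :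
    (∀ p : ℕ → Iv, IsConcat R (n - 1) p →
      ∃ q : ℕ → Iv,
        (IsOpConcat R (n - 1) q ∧ (q (n - 2)).1 = (p 0).1 ∧ (q 0).2 = (p (n - 2)).2) ∧
        ∀ q' : ℕ → Iv, IsOpConcat R (n - 1) q' → (q' (n - 2)).1 = (p 0).1 →
          (q' 0).2 = (p (n - 2)).2 → ∀ i < n - 1, q' i = q i) ∧
    (∀ q : ℕ → Iv, IsOpConcat R (n - 1) q →
      ∃ p : ℕ → Iv,
        (IsConcat R (n - 1) p ∧ (p 0).1 = (q (n - 2)).1 ∧ (p (n - 2)).2 = (q 0).2) ∧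
        ∀ p' : ℕ → Iv, IsConcat R (n - 1) p' → (p' 0).1 = (q (n - 2)).1 →
          (p' (n - 2)).2 = (q 0).2 → ∀ i < n - 1, p' i = p i) :=
  statement0_general R hR n

end Paper
end
end

section
/- Let w = w(p_1,…,p_{n-1}) = w^{op}(q^1,…,q^{n-1}) be the common support of an n-concatenation and its corresponding n-op-concatenation. If q^m has length two for some 1 < m < n, then q^m = p_m and q^{m-1} = p_{m-1}. -/
/-!
Common framework for formalizing "Hochschild cohomology of triangular string
algebras and its ring structure" (Redondo–Román).

* Interval combinatorics model of Bardzell's `n`-concatenations along a directed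
  path (a directed path is modelled by the line `ℕ`, a subpath by an interval,
  and a relation by the interval it occupies).
* A combinatorial model of a bound quiver `(Q, I)` with `I` a monomial ideal
  generated by a reduced set `R` of paths: paths are nonempty composable lists
  of arrows, `AP_n` is the set of supports of `n`-concatenations, `𝒫` is the
  basis of `A = kQ/I` given by the paths not in `I`.
* The Hochschild complex `Hom_{E-E}(kAP_n, A) ≅ k(AP_n ∥ 𝒫)` of a (triangular)
  monomial algebra obtained from Bardzell's minimal resolution, with its
  differentials `F_n` realized as explicit matrices, and the Hochschild
  cohomology `HH^n(A)` defined as the cohomology of this complex (for monomial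
  algebras this complex computes Hochschild cohomology, by Bardzell's theorem).
-/

attribute [local instance] Classical.propDecidable

noncomputable section

namespace Paper

variable (Q : QuivData)

/-! ### The Hochschild complex obtained from Bardzell's resolution -/

variable (k : Type) [Field k]

/-!
In a reduced set of relations, ordering by source and ordering by
target agree, so a concatenation `p` moves strictly to the right and an
op-concatenation `q` strictly to the left. Pairing `p_j` with `q^j` (i.e. `p j`
with `q (K - 1 - j)`), one shows by induction from the common right end of the
support that `p_j` lies weakly to the left of `q^j` and that `q^j` overlaps
`p_{j-1}`: otherwise `q^j` would be a candidate for `p_j` with a smaller source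
than Bardzell's choice, or `p_{j-1}` a candidate for `q^{j-1}` with a larger
target. If `q^m` has length two, it starts before `p_{m-1}` ends and so ends no
later than `p_m`; lying weakly to the right of `p_m`, it must be `p_m`. Then
`q^{m-1}`, which ends before `q^m` does, lies inside `p_{m-1}` and so equals it.
-/

section Chains

variable {R : Set Iv} {K i : ℕ} {p q : ℕ → Iv} {r s : Iv}

namespace RelSet

theorem fst_le_fst_of_snd_le (hR : RelSet R) (hr : r ∈ R) (hs : s ∈ R) (h : r.2 ≤ s.2) :
    r.1 ≤ s.1 := by
  by_contra! hlt
  obtain rfl := hR.nodiv s hs r hr hlt.le h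
  exact lt_irrefl _ hlt

theorem snd_le_snd_of_fst_le (hR : RelSet R) (hr : r ∈ R) (hs : s ∈ R) (h : r.1 ≤ s.1) :
    r.2 ≤ s.2 := by
  by_contra! hlt
  obtain rfl := hR.nodiv r hr s hs h hlt.le
  exact lt_irrefl _ hlt

theorem snd_lt_snd_of_fst_lt (hR : RelSet R) (hr : r ∈ R) (hs : s ∈ R) (h : r.1 < s.1) :
    r.2 < s.2 :=
  lt_of_not_ge fun h' => (hR.fst_le_fst_of_snd_le hs hr h').not_gt h

theorem fst_lt_fst_of_snd_lt (hR : RelSet R) (hr : r ∈ R) (hs : s ∈ R) (h : r.2 < s.2) :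
    r.1 < s.1 :=
  lt_of_not_ge fun h' => (hR.snd_le_snd_of_fst_le hs hr h').not_gt h

theorem eq_of_snd_eq (hR : RelSet R) (hr : r ∈ R) (hs : s ∈ R) (h : r.2 = s.2) : r = s :=
  hR.nodiv r hr s hs (hR.fst_le_fst_of_snd_le hr hs h.le) h.ge

end RelSet

theorem mem_cWindow_one :
    r ∈ cWindow R p 1 ↔ r ∈ R ∧ (p 0).1 < r.1 ∧ r.1 < (p 0).2 := by
  rw [cWindow, if_pos rfl]; rfl

theorem mem_cWindow_add_two :
    r ∈ cWindow R p (i + 2) ↔ r ∈ R ∧ (p i).2 ≤ r.1 ∧ r.1 < (p (i + 1)).2 := by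
  rw [cWindow, if_neg (by omega)]; rfl

theorem mem_oWindow_one :
    r ∈ oWindow R q 1 ↔ r ∈ R ∧ (q 0).1 < r.2 ∧ r.2 < (q 0).2 := by
  rw [oWindow, if_pos rfl]; rfl

theorem mem_oWindow_add_two :
    r ∈ oWindow R q (i + 2) ↔ r ∈ R ∧ (q (i + 1)).1 < r.2 ∧ r.2 ≤ (q i).1 := by
  rw [oWindow, if_neg (by omega)]; rfl

namespace IsConcat

theorem mem (hp : IsConcat R K p) (hi : i < K) : p i ∈ R := by
  rcases i with _ | _ | i
  · exact hp.1
  · exact (mem_cWindow_one.1 (hp.2 1 le_rfl hi).1).1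
  · exact (mem_cWindow_add_two.1 (hp.2 (i + 2) (by omega) hi).1).1

theorem fst_lt_snd (hp : IsConcat R K p) (hi : i + 1 < K) : (p (i + 1)).1 < (p i).2 := by
  rcases i with _ | i
  · exact (mem_cWindow_one.1 (hp.2 1 le_rfl hi).1).2.2
  · exact (mem_cWindow_add_two.1 (hp.2 (i + 2) (by omega) hi).1).2.2

theorem snd_le_fst (hp : IsConcat R K p) (hi : i + 2 < K) : (p i).2 ≤ (p (i + 2)).1 :=
  (mem_cWindow_add_two.1 (hp.2 (i + 2) (by omega) hi).1).2.1

theorem fst_lt_fst (hp : IsConcat R K p) (hi : i + 1 < K) : (p i).1 < (p (i + 1)).1 := by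
  rcases i with _ | i
  · exact (mem_cWindow_one.1 (hp.2 1 le_rfl hi).1).2.1
  · exact (hp.fst_lt_snd (by omega)).trans_le (hp.snd_le_fst hi)

theorem snd_lt_snd (hR : RelSet R) (hp : IsConcat R K p) (hi : i + 1 < K) :
    (p i).2 < (p (i + 1)).2 :=
  hR.snd_lt_snd_of_fst_lt (hp.mem (by omega)) (hp.mem hi) (hp.fst_lt_fst hi)

theorem fst_le_of_mem (hp : IsConcat R K p) (hi : i + 2 < K) (hr : r ∈ R)
    (h₁ : (p i).2 ≤ r.1) (h₂ : r.1 < (p (i + 1)).2) : (p (i + 2)).1 ≤ r.1 :=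
  (hp.2 (i + 2) (by omega) hi).2 r (mem_cWindow_add_two.2 ⟨hr, h₁, h₂⟩)

end IsConcat

namespace IsOpConcat

theorem mem (hq : IsOpConcat R K q) (hi : i < K) : q i ∈ R := by
  rcases i with _ | _ | i
  · exact hq.1
  · exact (mem_oWindow_one.1 (hq.2 1 le_rfl hi).1).1
  · exact (mem_oWindow_add_two.1 (hq.2 (i + 2) (by omega) hi).1).1

theorem fst_lt_snd (hq : IsOpConcat R K q) (hi : i + 1 < K) : (q i).1 < (q (i + 1)).2 := by
  rcases i with _ | i
  · exact (mem_oWindow_one.1 (hq.2 1 le_rfl hi).1).2.1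
  · exact (mem_oWindow_add_two.1 (hq.2 (i + 2) (by omega) hi).1).2.1

theorem snd_le_fst (hq : IsOpConcat R K q) (hi : i + 2 < K) : (q (i + 2)).2 ≤ (q i).1 :=
  (mem_oWindow_add_two.1 (hq.2 (i + 2) (by omega) hi).1).2.2

theorem snd_lt_snd (hq : IsOpConcat R K q) (hi : i + 1 < K) : (q (i + 1)).2 < (q i).2 := by
  rcases i with _ | i
  · exact (mem_oWindow_one.1 (hq.2 1 le_rfl hi).1).2.2
  · exact (hq.snd_le_fst hi).trans_lt (hq.fst_lt_snd (by omega))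

theorem fst_lt_fst (hR : RelSet R) (hq : IsOpConcat R K q) (hi : i + 1 < K) :
    (q (i + 1)).1 < (q i).1 :=
  hR.fst_lt_fst_of_snd_lt (hq.mem hi) (hq.mem (by omega)) (hq.snd_lt_snd hi)

theorem snd_le_of_mem_one (hq : IsOpConcat R K q) (hK : 1 < K) (hr : r ∈ R)
    (h₁ : (q 0).1 < r.2) (h₂ : r.2 < (q 0).2) : r.2 ≤ (q 1).2 :=
  (hq.2 1 le_rfl hK).2 r (mem_oWindow_one.2 ⟨hr, h₁, h₂⟩)

theorem snd_le_of_mem (hq : IsOpConcat R K q) (hi : i + 2 < K) (hr : r ∈ R)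
    (h₁ : (q (i + 1)).1 < r.2) (h₂ : r.2 ≤ (q i).1) : r.2 ≤ (q (i + 2)).2 :=
  (hq.2 (i + 2) (by omega) hi).2 r (mem_oWindow_add_two.2 ⟨hr, h₁, h₂⟩)

end IsOpConcat

variable (hR : RelSet R) (hp : IsConcat R K p) (hq : IsOpConcat R K q)
include hR hp hq

theorem opConcat_fst_lt_concat_snd {j : ℕ} (hj : j + 2 < K) (hi : i + 1 < K)
    (hprev : (q i).1 < (p (j + 1)).2) (hend : (q (i + 1)).2 < (p (j + 2)).2) :
    (q (i + 1)).1 < (p j).2 := by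
  by_contra! hgap
  by_cases hstart : (q (i + 1)).1 < (p (j + 1)).2
  · -- `q (i + 1)` was a candidate for `p (j + 2)`
    have hmin := hp.fst_le_of_mem hj (hq.mem hi) hgap hstart
    exact (hR.snd_le_snd_of_fst_le (hp.mem hj) (hq.mem hi) hmin).not_gt hend
  · have := hq.fst_lt_fst hR hi
    omega

theorem concat_snd_le_opConcat_snd_and_fst_lt_snd (ht : (q 0).2 = (p (K - 1)).2) :
    ∀ i j, i + j + 1 = K →
      (p j).2 ≤ (q i).2 ∧ ∀ j', j = j' + 1 → (q i).1 < (p j').2 := by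
  intro i
  induction i using Nat.strong_induction_on with
  | _ i IH =>
    intro j hij
    rcases i with _ | _ | i
    · obtain rfl : j = K - 1 := by omega
      have hq₀ := hR.eq_of_snd_eq (hq.mem (by omega)) (hp.mem (by omega)) ht
      refine ⟨ht.ge, fun j' hj' => ?_⟩
      rw [hq₀, hj']
      exact hp.fst_lt_snd (by omega)
    · have hC : (q 0).1 < (p j).2 := (IH 0 (by omega) (j + 1) (by omega)).2 j rfl
      have hend : (q 0).2 = (p (j + 1)).2 := by rw [ht, show K - 1 = j + 1 by omega]
      have hB := hq.snd_le_of_mem_one (by omega) (hp.mem (by omega)) hC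
        (hend ▸ hp.snd_lt_snd hR (by omega))
      refine ⟨hB, fun j' hj' => ?_⟩
      subst hj'
      exact opConcat_fst_lt_concat_snd hR hp hq (by omega) (by omega) hC
        (hend ▸ hq.snd_lt_snd (by omega))
    · obtain ⟨hB₀, hC₀⟩ := IH i (by omega) (j + 2) (by omega)
      have hC₁ : (q (i + 1)).1 < (p j).2 := (IH (i + 1) (by omega) (j + 1) (by omega)).2 j rfl
      have hA₀ := hR.fst_le_fst_of_snd_le (hp.mem (by omega)) (hq.mem (by omega)) hB₀
      have hB := hq.snd_le_of_mem (by omega) (hp.mem (by omega)) hC₁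
        ((hp.snd_le_fst (by omega)).trans hA₀)
      refine ⟨hB, fun j' hj' => ?_⟩
      subst hj'
      exact opConcat_fst_lt_concat_snd hR hp hq (by omega) (by omega) hC₁
        ((hq.snd_le_fst (by omega)).trans_lt (hC₀ (j' + 2) (by omega)))

end Chains

/-- In 0-based indexing, `q^j = q (n - 1 - j)` and `p_j = p (j - 1)`. -/
theorem statement3_general (R : Set Iv) (hR : RelSet R) (n m : ℕ) (h1 : 1 < m) (h2 : m < n)
    (p q : ℕ → Iv) (hp : IsConcat R (n - 1) p) (hq : IsOpConcat R (n - 1) q)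
    (ht : (q 0).2 = (p (n - 2)).2)
    (hlen : (q (n - 1 - m)).2 = (q (n - 1 - m)).1 + 2) :
    q (n - 1 - m) = p (m - 1) ∧ q (n - m) = p (m - 2) := by
  have ht' : (q 0).2 = (p (n - 1 - 1)).2 := ht
  have key := concat_snd_le_opConcat_snd_and_fst_lt_snd hR hp hq ht'
  obtain ⟨hB, hoverlap⟩ := key (n - 1 - m) (m - 1) (by omega)
  have hC : (q (n - 1 - m)).1 < (p (m - 2)).2 := hoverlap (m - 2) (by omega)
  have hB' := (key (n - m) (m - 2) (by omega)).1
  have hp_lt : (p (m - 2)).2 < (p (m - 1)).2 := by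
    have := hp.snd_lt_snd hR (i := m - 2) (by omega)
    rwa [show m - 2 + 1 = m - 1 by omega] at this
  have hq_lt : (q (n - m)).2 < (q (n - 1 - m)).2 := by
    have := hq.snd_lt_snd (i := n - 1 - m) (by omega)
    rwa [show n - 1 - m + 1 = n - m by omega] at this
  constructor
  · exact hR.eq_of_snd_eq (hq.mem (by omega)) (hp.mem (by omega)) (by omega)
  · refine (hR.nodiv _ (hp.mem (by omega)) _ (hq.mem (by omega)) ?_ (by omega)).symm
    exact hR.fst_le_fst_of_snd_le (hp.mem (by omega)) (hq.mem (by omega)) hB'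

/-- **Lemma (p=q) / Statement 3.** Let `w = w(p_1, …, p_{n-1}) =
w^{op}(q^1, …, q^{n-1})` be the common support of an `n`-concatenation and its
corresponding `n`-op-concatenation.  If `q^m` has length two for some
`1 < m < n`, then `q^m = p_m` and `q^{m-1} = p_{m-1}`.  (In 0-based indexing,
`q^j = q (n - 1 - j)` and `p_j = p (j - 1)`.) -/
theorem statement3 (R : Set Iv) (hR : RelSet R) (n m : ℕ) (h1 : 1 < m) (h2 : m < n)
    (p q : ℕ → Iv) (hp : IsConcat R (n - 1) p) (hq : IsOpConcat R (n - 1) q)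
    (hs : (q (n - 2)).1 = (p 0).1) (ht : (q 0).2 = (p (n - 2)).2)
    (hlen : (q (n - 1 - m)).2 = (q (n - 1 - m)).1 + 2) :
    q (n - 1 - m) = p (m - 1) ∧ q (n - m) = p (m - 2) :=
  statement3_general R hR n m h1 h2 p q hp hq ht hlen


end Paper
end
end

section
/- For a triangular string algebra A = kQ/I: if the classes of a pair (ρ, γ) lie in (AP_n // P) (ρ ∈ AP_n, γ ∈ P parallel to ρ), then ρ and γ share at most one common first arrow and at most one common last arrow; i.e., if ρ = α_1…α_s β ρ̄ and γ = α_1…α_s δ γ̄ with β ≠ δ arrows, then s = 1 and α_1 β ∈ I. -/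
/-!
Common framework for formalizing "Hochschild cohomology of triangular string
algebras and its ring structure" (Redondo–Román).

* Interval combinatorics model of Bardzell's `n`-concatenations along a directed
  path (a directed path is modelled by the line `ℕ`, a subpath by an interval,
  and a relation by the interval it occupies).
* A combinatorial model of a bound quiver `(Q, I)` with `I` a monomial ideal
  generated by a reduced set `R` of paths: paths are nonempty composable lists
  of arrows, `AP_n` is the set of supports of `n`-concatenations, `𝒫` is the
  basis of `A = kQ/I` given by the paths not in `I`.
* The Hochschild complex `Hom_{E-E}(kAP_n, A) ≅ k(AP_n ∥ 𝒫)` of a (triangular)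
  monomial algebra obtained from Bardzell's minimal resolution, with its
  differentials `F_n` realized as explicit matrices, and the Hochschild
  cohomology `HH^n(A)` defined as the cohomology of this complex (for monomial
  algebras this complex computes Hochschild cohomology, by Bardzell's theorem).
-/

attribute [local instance] Classical.propDecidable

noncomputable section

namespace Paper

variable (Q : QuivData)

/-! ### The Hochschild complex obtained from Bardzell's resolution -/

variable (k : Type) [Field k]

/-! If `ρ` and `γ` branch apart after a common arrow `a`, as `a b` and `a d`, then `a d ∉ I`
since `γ ∉ I`, so the string condition forces the relation `a b`. The relation with which
`ρ ∈ AP_n` begins (resp. ends) cannot lie inside the common part, again since `γ ∉ I`; so it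
contains `a b`, and by minimality of `R` it equals `a b`. -/

open List

section Infix

variable {α : Type*} {R : Set (List α)}

theorem eq_nil_of_prefix_mem (hmin : ∀ r ∈ R, ∀ r' ∈ R, r' <:+: r → r' = r)
    {init ρ r : List α} {a b : α} (hab : [a, b] ∈ R) (hr : r ∈ R)
    (hrρ : r <+: init ++ [a, b] ++ ρ) (hr_not : ¬ r <+: init ++ [a]) : init = [] := by
  have hle : init ++ [a, b] <+: r := by
    rcases prefix_or_prefix_of_prefix hrρ (prefix_append _ _) with h | h
    · rw [show init ++ [a, b] = init ++ [a] ++ [b] by simp, prefix_concat_iff] at h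
      rcases h with h | h
      · simp [h]
      · exact absurd h hr_not
    · exact h
  have hr_eq : [a, b] = r := hmin r hr _ hab ((suffix_append _ _).isInfix.trans hle.isInfix)
  simpa [← hr_eq] using hle.length_le

theorem eq_nil_of_suffix_mem (hmin : ∀ r ∈ R, ∀ r' ∈ R, r' <:+: r → r' = r)
    {ρ tail r : List α} {a b : α} (hba : [b, a] ∈ R) (hr : r ∈ R)
    (hrρ : r <:+ ρ ++ [b, a] ++ tail) (hr_not : ¬ r <:+ a :: tail) : tail = [] := by
  have hmin_rev : ∀ r ∈ reverse ⁻¹' R, ∀ r' ∈ reverse ⁻¹' R, r' <:+: r → r' = r :=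
    fun r hr r' hr' h => reverse_injective (hmin _ hr _ hr' (reverse_infix.mpr h))
  have := eq_nil_of_prefix_mem (R := reverse ⁻¹' R) (init := tail.reverse) (r := r.reverse)
    (ρ := ρ.reverse) hmin_rev (by simpa using hba) (by simpa using hr)
    (by simpa using reverse_prefix.mpr hrρ) (by simpa [← reverse_prefix] using hr_not)
  simpa using this

end Infix

theorem IsConcat.mem_s6 {R : Set Iv} {k : ℕ} {p : ℕ → Iv} (h : IsConcat R k p) {i : ℕ}
    (hi : i < k) : p i ∈ R := by
  rcases Nat.eq_zero_or_pos i with rfl | hi0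
  · exact h.1
  · have hw := (h.2 i hi0 hi).1
    unfold cWindow at hw
    split_ifs at hw <;> exact hw.1

section Quiver

variable {Q} {R : Set (List Q.E)}

theorem IsAP.isPathL {n : ℕ} {ρ : List Q.E} (h : IsAP Q R n ρ) : IsPathL Q ρ := by
  match n, h with
  | 1, h | _ + 2, h => exact h.1

theorem IsAP.exists_mem_prefix {n : ℕ} {ρ : List Q.E} (h : IsAP Q R n ρ)
    (hlen : 2 ≤ ρ.length) : ∃ r ∈ R, r <+: ρ := by
  match n, h with
  | 1, h => exact absurd h.2 (by omega)
  | m + 2, ⟨_, p, hp, hp0, _⟩ =>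
    obtain ⟨-, -, hmem⟩ := hp.mem_s6 m.succ_pos
    refine ⟨_, hmem, ?_⟩
    simpa [slice, hp0] using take_prefix _ ρ

theorem IsAP.exists_mem_suffix {n : ℕ} {ρ : List Q.E} (h : IsAP Q R n ρ)
    (hlen : 2 ≤ ρ.length) : ∃ r ∈ R, r <:+ ρ := by
  match n, h with
  | 1, h => exact absurd h.2 (by omega)
  | m + 2, ⟨_, p, hp, _, hpm⟩ =>
    obtain ⟨-, -, hmem⟩ := hp.mem_s6 m.lt_succ_self
    refine ⟨_, hmem, ?_⟩
    rw [slice, hpm, take_of_length_le (by simp)]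
    exact drop_suffix _ _

theorem IsPathL.tgt_eq_src_of_infix {l : List Q.E} (hl : IsPathL Q l) {a b : Q.E}
    (hab : [a, b] <:+: l) : Q.tgt a = Q.src b := by
  simpa using hl.2.infix hab

theorem isP.pair_not_mem {l : List Q.E} (hl : isP Q R l) {a b : Q.E} (hab : [a, b] <:+: l) :
    [a, b] ∉ R :=
  fun h => hl.2 ⟨_, h, hab⟩

theorem PairSet.common_prefix_eq_singleton (hs : StringData Q R) {n : ℕ} {x : Pr Q}
    (hx : x ∈ PairSet Q R n) {init ρ γ : List Q.E} {a b d : Q.E}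
    (hρ : x.1 = init ++ [a, b] ++ ρ) (hγ : x.2 = init ++ [a, d] ++ γ) (hbd : b ≠ d) :
    init = [] ∧ [a, b] ∈ R := by
  obtain ⟨hρAP, hγP, -, -⟩ := hx
  have hab_infix : [a, b] <:+: x.1 := hρ ▸ infix_append _ _ _
  have had_infix : [a, d] <:+: x.2 := hγ ▸ infix_append _ _ _
  have hab : [a, b] ∈ R := by
    by_contra hab
    exact hbd (hs.uniqRight a b d (hρAP.isPathL.tgt_eq_src_of_infix hab_infix)
      (hγP.1.tgt_eq_src_of_infix had_infix) hab (hγP.pair_not_mem had_infix))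
  obtain ⟨r, hr, hrρ⟩ := hρAP.exists_mem_prefix (hab_infix.length_le.trans' (by simp))
  refine ⟨eq_nil_of_prefix_mem hs.relMin hab hr (hρ ▸ hrρ) fun hr_init => ?_, hab⟩
  exact hγP.2 ⟨r, hr, hr_init.isInfix.trans (hγ ▸ ⟨[], d :: γ, by simp⟩)⟩

theorem PairSet.common_suffix_eq_singleton (hs : StringData Q R) {n : ℕ} {x : Pr Q}
    (hx : x ∈ PairSet Q R n) {ρ γ tail : List Q.E} {a b d : Q.E}
    (hρ : x.1 = ρ ++ [b, a] ++ tail) (hγ : x.2 = γ ++ [d, a] ++ tail) (hbd : b ≠ d) :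
    tail = [] ∧ [b, a] ∈ R := by
  obtain ⟨hρAP, hγP, -, -⟩ := hx
  have hba_infix : [b, a] <:+: x.1 := hρ ▸ infix_append _ _ _
  have hda_infix : [d, a] <:+: x.2 := hγ ▸ infix_append _ _ _
  have hba : [b, a] ∈ R := by
    by_contra hba
    exact hbd (hs.uniqLeft a b d (hρAP.isPathL.tgt_eq_src_of_infix hba_infix)
      (hγP.1.tgt_eq_src_of_infix hda_infix) hba (hγP.pair_not_mem hda_infix))
  obtain ⟨r, hr, hrρ⟩ := hρAP.exists_mem_suffix (hba_infix.length_le.trans' (by simp))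
  refine ⟨eq_nil_of_suffix_mem hs.relMin hba hr (hρ ▸ hrρ) fun hr_tail => ?_, hba⟩
  exact hγP.2 ⟨r, hr, hr_tail.isInfix.trans (hγ ▸ ⟨γ ++ [d], [], by simp⟩)⟩

end Quiver

theorem statement6_general (Q : QuivData) (R : Set (List Q.E)) (hs : StringData Q R)
    (n : ℕ) (x : Pr Q) (hx : x ∈ PairSet Q R n) :
    (∀ (pre : List Q.E) (b d : Q.E) (ρ' γ' : List Q.E), pre ≠ [] →
      x.1 = pre ++ b :: ρ' → x.2 = pre ++ d :: γ' → b ≠ d →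
      pre.length = 1 ∧ inI Q R (pre ++ [b])) ∧
    (∀ (suf : List Q.E) (b d : Q.E) (ρ' γ' : List Q.E), suf ≠ [] →
      x.1 = ρ' ++ b :: suf → x.2 = γ' ++ d :: suf → b ≠ d →
      suf.length = 1 ∧ inI Q R (b :: suf)) := by
  constructor
  · rintro pre b d ρ' γ' hpre hρ hγ hbd
    obtain ⟨init, a, rfl⟩ := (eq_nil_or_concat pre).resolve_left hpre
    obtain ⟨rfl, hab⟩ := PairSet.common_prefix_eq_singleton hs hx
      (by simpa using hρ) (by simpa using hγ) hbd
    exact ⟨rfl, [a, b], hab, infix_refl _⟩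
  · rintro suf b d ρ' γ' hsuf hρ hγ hbd
    obtain ⟨a, tail, rfl⟩ := exists_cons_of_ne_nil hsuf
    obtain ⟨rfl, hba⟩ := PairSet.common_suffix_eq_singleton hs hx
      (by simpa using hρ) (by simpa using hγ) hbd
    exact ⟨rfl, [b, a], hba, infix_refl _⟩

/-- **Remark 4.1(2) / Statement 6.** For a triangular string algebra, a pair
`(ρ, γ) ∈ (AP_n ∥ 𝒫)` has at most one common first arrow and at most one
common last arrow: if `ρ = α_1 ⋯ α_s β ρ̄` and `γ = α_1 ⋯ α_s δ γ̄` with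
`β ≠ δ`, then `s = 1` and `α_1 β ∈ I` (and dually for last arrows). -/
theorem statement6 (Q : QuivData) (R : Set (List Q.E)) (hs : StringData Q R)
    (n : ℕ) (hn : 1 ≤ n) (x : Pr Q) (hx : x ∈ PairSet Q R n) :
    (∀ (pre : List Q.E) (b d : Q.E) (ρ' γ' : List Q.E), pre ≠ [] →
      x.1 = pre ++ b :: ρ' → x.2 = pre ++ d :: γ' → b ≠ d →
      pre.length = 1 ∧ inI Q R (pre ++ [b])) ∧
    (∀ (suf : List Q.E) (b d : Q.E) (ρ' γ' : List Q.E), suf ≠ [] →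
      x.1 = ρ' ++ b :: suf → x.2 = γ' ++ d :: suf → b ≠ d →
      suf.length = 1 ∧ inI Q R (b :: suf)) :=
  statement6_general Q R hs n x hx

end Paper
end
end

section
/- For a triangular string algebra A = kQ/I, the set (1,1)_2 is empty: no relation ρ = α_1 α_2 ∈ R admits a parallel path γ ∈ P with γ ∈ α_1 · kQ · α_2. Consequently (R // P) decomposes as the disjoint union of (0,0)_2, (1,0)_2 and (0,1)_2. -/
/-!
Common framework for formalizing "Hochschild cohomology of triangular string
algebras and its ring structure" (Redondo–Román).

* Interval combinatorics model of Bardzell's `n`-concatenations along a directed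
  path (a directed path is modelled by the line `ℕ`, a subpath by an interval,
  and a relation by the interval it occupies).
* A combinatorial model of a bound quiver `(Q, I)` with `I` a monomial ideal
  generated by a reduced set `R` of paths: paths are nonempty composable lists
  of arrows, `AP_n` is the set of supports of `n`-concatenations, `𝒫` is the
  basis of `A = kQ/I` given by the paths not in `I`.
* The Hochschild complex `Hom_{E-E}(kAP_n, A) ≅ k(AP_n ∥ 𝒫)` of a (triangular)
  monomial algebra obtained from Bardzell's minimal resolution, with its
  differentials `F_n` realized as explicit matrices, and the Hochschild
  cohomology `HH^n(A)` defined as the cohomology of this complex (for monomial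
  algebras this complex computes Hochschild cohomology, by Bardzell's theorem).
-/

attribute [local instance] Classical.propDecidable

noncomputable section

namespace Paper

variable (Q : QuivData)

/-! ### The Hochschild complex obtained from Bardzell's resolution -/

variable (k : Type) [Field k]

/-!
Let `(ρ, γ) ∈ (1,1)_2`: a relation `ρ` and a parallel basis path `γ` with the same first and
the same last arrow. We show `γ = ρ`, which is absurd since `ρ ∈ I`. If `ρ = a b` has length
two, `γ` is a path from `a` to `b`, and without oriented cycles that forces `γ = a b`.
Otherwise no relation of length two occurs in `ρ` (minimality of `R`) nor in `γ` (as `γ ∉ I`),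
so by the string condition both are continuations of the same first arrow along the unique
admissible route; one is a prefix of the other, and since they end at the same vertex, they
are equal.
-/

section Paths

variable {Q : QuivData}

lemma psrc_append {l₁ : List Q.E} (l₂ : List Q.E) (h₁ : l₁ ≠ []) :
    psrc Q (l₁ ++ l₂) = psrc Q l₁ := by
  rw [psrc, psrc, List.head?_append_of_ne_nil _ h₁]

lemma ptgt_append (l₁ : List Q.E) {l₂ : List Q.E} (h₂ : l₂ ≠ []) :
    ptgt Q (l₁ ++ l₂) = ptgt Q l₂ := by
  rw [ptgt, ptgt, List.getLast?_append_of_ne_nil _ h₂]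

lemma IsPathL.left_of_append {l₁ l₂ : List Q.E} (h : IsPathL Q (l₁ ++ l₂))
    (h₁ : l₁ ≠ []) : IsPathL Q l₁ :=
  ⟨h₁, h.2.left_of_append⟩

lemma IsPathL.right_of_append {l₁ l₂ : List Q.E} (h : IsPathL Q (l₁ ++ l₂))
    (h₂ : l₂ ≠ []) : IsPathL Q l₂ :=
  ⟨h₂, h.2.right_of_append⟩

lemma IsPathL.ptgt_eq_psrc_of_append {l₁ l₂ : List Q.E} (h : IsPathL Q (l₁ ++ l₂))
    (h₁ : l₁ ≠ []) (h₂ : l₂ ≠ []) : ptgt Q l₁ = psrc Q l₂ := by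
  have hjoin := (List.isChain_append.mp h.2).2.2
  have hlast := List.getLast?_eq_some_getLast h₁
  have hhead := List.head?_eq_some_head h₂
  rw [ptgt, psrc, hlast, hhead]
  exact congrArg some (hjoin _ hlast _ hhead)

lemma IsPathL.eq_of_prefix_of_ptgt_eq (hQ : ∀ l, IsPathL Q l → psrc Q l ≠ ptgt Q l)
    {l₁ l₂ : List Q.E} (hl₂ : IsPathL Q l₂) (h₁ : l₁ ≠ [])
    (hpre : l₁ <+: l₂) (ht : ptgt Q l₁ = ptgt Q l₂) : l₁ = l₂ := by
  obtain ⟨s, rfl⟩ := hpre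
  rcases eq_or_ne s [] with rfl | hs
  · exact (List.append_nil l₁).symm
  refine absurd ?_ (hQ s (hl₂.right_of_append hs))
  rw [← hl₂.ptgt_eq_psrc_of_append h₁ hs, ht, ptgt_append _ hs]

lemma IsPathL.eq_of_suffix_of_psrc_eq (hQ : ∀ l, IsPathL Q l → psrc Q l ≠ ptgt Q l)
    {l₁ l₂ : List Q.E} (hl₂ : IsPathL Q l₂) (h₁ : l₁ ≠ [])
    (hsuf : l₁ <:+ l₂) (hs : psrc Q l₁ = psrc Q l₂) : l₁ = l₂ := by
  obtain ⟨p, rfl⟩ := hsuf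
  rcases eq_or_ne p [] with rfl | hp
  · exact (List.nil_append l₁).symm
  refine absurd ?_ (hQ p (hl₂.left_of_append hp))
  rw [hl₂.ptgt_eq_psrc_of_append hp h₁, hs, psrc_append _ hp]

lemma IsPathL.eq_pair_of_head?_of_getLast? (hQ : ∀ l, IsPathL Q l → psrc Q l ≠ ptgt Q l)
    {γ : List Q.E} {a b : Q.E} (hγ : IsPathL Q γ) (hab : Q.tgt a = Q.src b)
    (ha : γ.head? = some a) (hb : γ.getLast? = some b) : γ = [a, b] := by
  obtain ⟨t, rfl⟩ := List.head?_eq_some_iff.mp ha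
  rcases eq_or_ne t [] with rfl | ht
  · obtain rfl : a = b := by simpa using hb
    exact absurd (by simp [psrc, ptgt, hab]) (hQ [a] hγ)
  · have hbt : [b] <:+ t := by
      have hb' : t.getLast? = some b := by
        rwa [← List.singleton_append, List.getLast?_append_of_ne_nil _ ht] at hb
      obtain ⟨s, hs⟩ := List.getLast?_eq_some_iff.mp hb'
      exact ⟨s, hs.symm⟩
    have htail : IsPathL Q ([a] ++ t) := hγ
    have hsrc : psrc Q [b] = psrc Q t := by
      rw [← htail.ptgt_eq_psrc_of_append (List.cons_ne_nil a []) ht]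
      simp [psrc, ptgt, hab]
    have htb : [b] = t :=
      (htail.right_of_append ht).eq_of_suffix_of_psrc_eq hQ (List.cons_ne_nil b []) hbt hsrc
    rw [← htb]

end Paths

section StringAlgebra

variable {Q : QuivData} {R : Set (List Q.E)}

lemma mem_of_isAP_two {ρ : List Q.E} (hρ : IsAP Q R 2 ρ) : ρ ∈ R := by
  obtain ⟨-, p, ⟨⟨-, -, hp⟩, -⟩, hsrc, htgt⟩ := hρ
  simpa [slice, hsrc, htgt] using hp

lemma not_isP_of_mem {ρ : List Q.E} (hρ : ρ ∈ R) : ¬ isP Q R ρ :=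
  fun h => h.2 ⟨ρ, hρ, List.infix_refl ρ⟩

/-- At each vertex a path avoiding the relations of length two can be continued
in at most one way (condition S2 of a string algebra). -/
lemma prefix_or_prefix_of_head?_eq (hs : StringData Q R) {l₁ l₂ : List Q.E}
    (h₁ : l₁.IsChain fun a b => Q.tgt a = Q.src b)
    (h₂ : l₂.IsChain fun a b => Q.tgt a = Q.src b)
    (hR₁ : ∀ a b, [a, b] <:+: l₁ → [a, b] ∉ R)
    (hR₂ : ∀ a b, [a, b] <:+: l₂ → [a, b] ∉ R)
    (hhead : l₁.head? = l₂.head?) : l₁ <+: l₂ ∨ l₂ <+: l₁ := by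
  induction l₁ generalizing l₂ with
  | nil => exact Or.inl List.nil_prefix
  | cons a t₁ ih =>
    obtain ⟨t₂, rfl⟩ := List.head?_eq_some_iff.mp hhead.symm
    match t₁, t₂, h₁, h₂ with
    | [], t₂, _, _ => exact Or.inl (List.prefix_append [a] t₂)
    | t₁, [], _, _ => exact Or.inr (List.prefix_append [a] t₁)
    | b :: t₁, c :: t₂, h₁, h₂ =>
      rw [List.isChain_cons_cons] at h₁ h₂
      obtain rfl : b = c := hs.uniqRight a b c h₁.1 h₂.1
        (hR₁ a b (List.prefix_append [a, b] t₁).isInfix)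
        (hR₂ a c (List.prefix_append [a, c] t₂).isInfix)
      have htails := ih h₁.2 h₂.2 (fun x y hin => hR₁ x y (List.infix_cons hin))
        (fun x y hin => hR₂ x y (List.infix_cons hin)) rfl
      exact htails.imp (List.prefix_cons_inj a).mpr (List.prefix_cons_inj a).mpr

lemma fst_eq_snd_of_mem_cls11_two (hs : StringData Q R) {x : Pr Q} (hx : x ∈ cls11 Q R 2) :
    x.1 = x.2 := by
  obtain ⟨ρ, γ⟩ := x
  obtain ⟨⟨hAP, hγ, -, htgt⟩, hfirst, hlast⟩ := hx
  have hρR : ρ ∈ R := mem_of_isAP_two hAP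
  by_cases hlen : ρ.length = 2
  · obtain ⟨a, b, rfl⟩ := List.length_eq_two.mp hlen
    exact (hγ.1.eq_pair_of_head?_of_getLast? hs.triangular
      (List.isChain_cons_cons.mp hAP.1.2).1 hfirst.symm hlast.symm).symm
  · have hρ₂ : ∀ a b, [a, b] <:+: ρ → [a, b] ∉ R := fun a b hin hR =>
      hlen (by rw [← hs.relMin ρ hρR [a, b] hR hin]; rfl)
    have hγ₂ : ∀ a b, [a, b] <:+: γ → [a, b] ∉ R := fun a b hin hR =>
      hγ.2 ⟨[a, b], hR, hin⟩
    rcases prefix_or_prefix_of_head?_eq hs hAP.1.2 hγ.1.2 hρ₂ hγ₂ hfirst with h | h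
    · exact hγ.1.eq_of_prefix_of_ptgt_eq hs.triangular hAP.1.1 h htgt
    · exact (hAP.1.eq_of_prefix_of_ptgt_eq hs.triangular hγ.1.1 h htgt.symm).symm

lemma cls11_two_eq_empty (hs : StringData Q R) : cls11 Q R 2 = ∅ :=
  Set.eq_empty_of_forall_notMem fun _ hx =>
    not_isP_of_mem (mem_of_isAP_two hx.1.1) (fst_eq_snd_of_mem_cls11_two hs hx ▸ hx.1.2.1)

lemma pairSet_eq_union_of_cls11_eq_empty {n : ℕ} (h : cls11 Q R n = ∅) :
    PairSet Q R n = cls00 Q R n ∪ cls10 Q R n ∪ cls01 Q R n := by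
  ext x
  refine ⟨fun hx => ?_, by rintro ((⟨hx, -⟩ | ⟨hx, -⟩) | ⟨hx, -⟩) <;> exact hx⟩
  have h11 : x ∉ cls11 Q R n := h ▸ Set.notMem_empty x
  by_cases h₁ : sharesFirst Q x <;> by_cases h₂ : sharesLast Q x
  · exact absurd ⟨hx, h₁, h₂⟩ h11
  · exact Or.inl (Or.inr ⟨hx, h₁, h₂⟩)
  · exact Or.inr ⟨hx, h₁, h₂⟩
  · exact Or.inl (Or.inl ⟨hx, h₁, h₂⟩)

end StringAlgebra

/-- **Remark 4.1(4) / Statement 7.** For a triangular string algebra,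
`(1,1)_2 = ∅`: no relation `ρ = α_1 α_2 ∈ R` admits a parallel basis path `γ`
starting with `α_1` and ending with `α_2`.  Consequently `(AP_2 ∥ 𝒫) =
(ℛ ∥ 𝒫)` is the (disjoint) union of `(0,0)_2`, `(1,0)_2` and `(0,1)_2`. -/
theorem statement7 (Q : QuivData) (R : Set (List Q.E)) (hs : StringData Q R) :
    cls11 Q R 2 = ∅ ∧
    PairSet Q R 2 = cls00 Q R 2 ∪ cls10 Q R 2 ∪ cls01 Q R 2 :=
  have h11 := cls11_two_eq_empty hs
  ⟨h11, pairSet_eq_union_of_cls11_eq_empty h11⟩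

end Paper
end
end
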